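/- Let d ≥ 2 be an even integer and set t = d/2. Define the t×t matrix B(P,d) whose k-th row (k = 1,…,t) is (b(kP), k^{d−3}, k^{d−5}, …, k), and the t×t matrix D(P,d) whose k-th row is (k^{d−1}, k^{d−3}, …, k). Then 2·e_{d−1}·det D(P,d) = det B(P,d); equivalently, the lattice surface area surf(P) = 2·e_{d−1} of P satisfies surf(P) = det B(P,d) / det D(P,d). -/

import Mathlib

open Finset MeasureTheory Pointwise

noncomputable section

/-- The canonical embedding of `ℤ^d` into `ℝ^d`. -/
def intCast (d : ℕ) : (Fin d → ℤ) → (Fin d → ℝ) := fun v i => (v i : ℝ)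

/-- The set of lattice points of `ℝ^d`. -/
def latticePts (d : ℕ) : Set (Fin d → ℝ) := Set.range (intCast d)

/-- `G S` is the number of lattice points in `S`. -/
def G {d : ℕ} (S : Set (Fin d → ℝ)) : ℕ := (S ∩ latticePts d).ncard

/-- `ip S` is the number of lattice points in the interior of `S`. -/
def ip {d : ℕ} (S : Set (Fin d → ℝ)) : ℕ := (interior S ∩ latticePts d).ncard

/-- `bp S` is the number of lattice points on the boundary of `S`. -/
def bp {d : ℕ} (S : Set (Fin d → ℝ)) : ℕ := G S - ip S

/-!
For even `d`, reciprocity gives `b(nP) = E(n) - E(-n) = 2 ∑ e_{2j+1} n^{2j+1}` for `n ≥ 1`: the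
even coefficients cancel. Hence the first column of `B(P,d)` is `D(P,d)` applied to the vector
`(2e_{d-1}, 2e_{d-3}, …, 2e_1)`, and replacing a column of `D` by a combination of its columns
multiplies the determinant by the coefficient of that column, here `2e_{d-1}`.
-/

-- `ncard` of an infinite set is `0`, so `bp S = G S - ip S` is only meaningful once this holds.
lemma finite_inter_latticePts {d : ℕ} {S : Set (Fin d → ℝ)} (hS : Bornology.IsBounded S) :
    (S ∩ latticePts d).Finite := by
  have hpre : (intCast d ⁻¹' S ∩ Set.univ).Finite :=
    Metric.finite_isBounded_inter_isClosed (isDiscrete_univ_iff.mpr inferInstance)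
      ((Real.isometry_intCast.postcomp_pi (α := Fin d)).antilipschitz.isBounded_preimage hS)
      isClosed_univ
  simpa [latticePts, Set.image_preimage_eq_inter_range] using hpre.image (intCast d)

lemma ip_le_G {d : ℕ} {S : Set (Fin d → ℝ)} (hS : Bornology.IsBounded S) : ip S ≤ G S :=
  Set.ncard_le_ncard (Set.inter_subset_inter_left _ interior_subset) (finite_inter_latticePts hS)

lemma cast_bp_of_isBounded {R : Type*} [AddGroupWithOne R] {d : ℕ} {S : Set (Fin d → ℝ)}
    (hS : Bornology.IsBounded S) : (bp S : R) = G S - ip S :=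
  Nat.cast_sub (ip_le_G hS)

lemma sum_range_sub_sum_range_neg_eq_sum_odd {R : Type*} [CommRing R] (f : ℕ → R) (x : R)
    (t : ℕ) : ∑ i ∈ range (2 * t + 1), f i * x ^ i - ∑ i ∈ range (2 * t + 1), f i * (-x) ^ i
      = ∑ j ∈ range t, 2 * f (2 * j + 1) * x ^ (2 * j + 1) := by
  induction t with
  | zero => simp
  | succ t ih =>
    have hodd : Odd (2 * t + 1) := odd_two_mul_add_one t
    have heven : Even (2 * t + 1 + 1) := hodd.add_one
    rw [sum_range_succ _ t, ← ih, show 2 * (t + 1) + 1 = 2 * t + 1 + 1 + 1 by ring,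
      sum_range_succ _ (2 * t + 1 + 1), sum_range_succ _ (2 * t + 1 + 1),
      sum_range_succ _ (2 * t + 1), sum_range_succ _ (2 * t + 1), hodd.neg_pow, heven.neg_pow]
    ring

lemma Matrix.det_updateCol_mulVec {n R : Type*} [Fintype n] [DecidableEq n] [CommRing R]
    (A : Matrix n n R) (v : n → R) (j : n) : (A.updateCol j (A.mulVec v)).det = v j * A.det := by
  rw [← smul_eq_mul, ← A.det_updateCol_sum j v]
  congr with k
  simp [Matrix.mulVec, dotProduct, mul_comm]

lemma cast_bp_smul_eq_sum_odd {d t : ℕ} (hd : d = 2 * t) {P : Set (Fin d → ℝ)}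
    (hP : Bornology.IsBounded P) (e : ℕ → ℚ)
    (hE : ∀ n : ℕ, (∑ i ∈ Finset.range (d + 1), e i * (n : ℚ) ^ i) = G ((n : ℝ) • P))
    (hRec : ∀ n : ℕ, 1 ≤ n →
      (∑ i ∈ Finset.range (d + 1), e i * (-(n : ℚ)) ^ i) = (-1) ^ d * ip ((n : ℝ) • P))
    {n : ℕ} (hn : 1 ≤ n) :
    (bp ((n : ℝ) • P) : ℚ) = ∑ j ∈ range t, 2 * e (d - 1 - 2 * j) * (n : ℚ) ^ (d - 1 - 2 * j) := by
  subst hd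
  have hbp : (bp ((n : ℝ) • P) : ℚ) = ∑ i ∈ range (2 * t + 1), e i * (n : ℚ) ^ i
      - ∑ i ∈ range (2 * t + 1), e i * (-(n : ℚ)) ^ i := by
    rw [cast_bp_of_isBounded (hP.smul₀ _), hE, hRec n hn, (even_two_mul t).neg_one_pow, one_mul]
  rw [hbp, sum_range_sub_sum_range_neg_eq_sum_odd, ← sum_range_reflect]
  refine sum_congr rfl fun j _ => ?_
  rw [show 2 * (t - 1 - j) + 1 = 2 * t - 1 - 2 * j by grind]

theorem surf_eq_det_ratio_even_general (d : ℕ) (hd2 : 2 ≤ d) (heven : Even d)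
    (P : Set (Fin d → ℝ))
    (hP : ∃ V : Finset (Fin d → ℤ), P = convexHull ℝ (intCast d '' ↑V))
    (e : ℕ → ℚ)
    (hE : ∀ n : ℕ, (∑ i ∈ Finset.range (d + 1), e i * (n : ℚ) ^ i) = G ((n : ℝ) • P))
    (hRec : ∀ n : ℕ, 1 ≤ n →
      (∑ i ∈ Finset.range (d + 1), e i * (-(n : ℚ)) ^ i) = (-1) ^ d * ip ((n : ℝ) • P))
    (t : ℕ) (ht : t = d / 2)
    (B D : Matrix (Fin t) (Fin t) ℚ)
    (hB : ∀ k j, B k j =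
      if (j : ℕ) = 0 then (bp ((((k : ℕ) + 1 : ℕ) : ℝ) • P) : ℚ)
      else ((k : ℕ) + 1 : ℚ) ^ (d - 1 - 2 * (j : ℕ)))
    (hD : ∀ k j, D k j = ((k : ℕ) + 1 : ℚ) ^ (d - 1 - 2 * (j : ℕ))) :
    2 * e (d - 1) * D.det = B.det := by
  obtain ⟨V, rfl⟩ := hP
  have hd : d = 2 * t := by grind
  have : NeZero t := ⟨by omega⟩
  have hbdd : Bornology.IsBounded (convexHull ℝ (intCast d '' ↑V)) :=
    ((V.finite_toSet.image _).isCompact_convexHull ℝ).isBounded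
  have hBD : B = D.updateCol 0 (D.mulVec fun j => 2 * e (d - 1 - 2 * j)) := by
    ext k j
    rw [Matrix.updateCol_apply, hB]
    rcases eq_or_ne j 0 with rfl | hj
    · rw [if_pos (by simp), if_pos rfl,
        cast_bp_smul_eq_sum_odd hd hbdd e hE hRec (Nat.le_add_left 1 k), ← Fin.sum_univ_eq_sum_range]
      simp [Matrix.mulVec, dotProduct, hD, mul_comm]
    · rw [if_neg (by simpa using hj), if_neg hj, hD]
  rw [hBD, Matrix.det_updateCol_mulVec, Fin.val_zero, mul_zero, Nat.sub_zero]

/-- for an even `d ≥ 2` and a `d`-dimensional lattice polytope `P`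
with Ehrhart polynomial `∑ eᵢ xⁱ`, the surface area `2 e_{d-1}` satisfies
`2 e_{d-1} = det B(P,d) / det D(P,d)`. -/
theorem surf_eq_det_ratio_even (d : ℕ) (hd2 : 2 ≤ d) (heven : Even d)
    (P : Set (Fin d → ℝ))
    (hP : ∃ V : Finset (Fin d → ℤ), P = convexHull ℝ (intCast d '' ↑V))
    (hdim : (interior P).Nonempty)
    (e : ℕ → ℚ)
    (hE : ∀ n : ℕ, (∑ i ∈ Finset.range (d + 1), e i * (n : ℚ) ^ i) = G ((n : ℝ) • P))
    (hRec : ∀ n : ℕ, 1 ≤ n →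
      (∑ i ∈ Finset.range (d + 1), e i * (-(n : ℚ)) ^ i) = (-1) ^ d * ip ((n : ℝ) • P))
    (t : ℕ) (ht : t = d / 2)
    (B D : Matrix (Fin t) (Fin t) ℚ)
    (hB : ∀ k j, B k j =
      if (j : ℕ) = 0 then (bp ((((k : ℕ) + 1 : ℕ) : ℝ) • P) : ℚ)
      else ((k : ℕ) + 1 : ℚ) ^ (d - 1 - 2 * (j : ℕ)))
    (hD : ∀ k j, D k j = ((k : ℕ) + 1 : ℚ) ^ (d - 1 - 2 * (j : ℕ))) :
    2 * e (d - 1) * D.det = B.det :=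
  surf_eq_det_ratio_even_general d hd2 heven P hP e hE hRec t ht B D hB hD
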